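/- arXiv:math-ph/0502050 — 2 statements merged into one kernel-verified Lean document; each statement's English description precedes it below -/
import Mathlib

section
/- The function B ↦ α(B)/√B is decreasing on (0,∞), the function B ↦ α(B)·√B is increasing on (0,∞), and sup_{B>0} α_c(B)/√B ≤ 1 for α_c defined by α_c = (2/c) log(√B/α_c) with c > 0; in particular α(B) is increasing in B. -/
open Real Set

/-- Monotonicity properties of `α(B)` (the unique positive solution of
`α + log α = (1/2) log B`) and of `α_c(B)` (the unique positive solution of
`α_c = (2/c) log(√B/α_c)`): `B ↦ α(B)/√B` is decreasing, `B ↦ α(B)·√B` is increasing,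
`α_c(B)/√B ≤ 1` for all `B > 0`, and `α` is increasing. -/
theorem alpha_monotonicity (α : ℝ → ℝ)
    (hα : ∀ B : ℝ, 0 < B → 0 < α B ∧ α B + Real.log (α B) = Real.log B / 2) :
    AntitoneOn (fun B => α B / Real.sqrt B) (Set.Ioi 0) ∧
    MonotoneOn (fun B => α B * Real.sqrt B) (Set.Ioi 0) ∧
    (∀ c : ℝ, 0 < c → ∀ αc : ℝ → ℝ,
      (∀ B : ℝ, 0 < B → 0 < αc B ∧ αc B = (2 / c) * Real.log (Real.sqrt B / αc B)) →
      ∀ B : ℝ, 0 < B → αc B / Real.sqrt B ≤ 1) ∧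
    MonotoneOn α (Set.Ioi 0) := by
  have key : ∀ B : ℝ, 0 < B → α B * Real.exp (α B) = Real.sqrt B := by
    intro B hB
    obtain ⟨h1, h2⟩ := hα B hB
    have hs : (0:ℝ) < Real.sqrt B := Real.sqrt_pos.mpr hB
    have hlog : Real.log (α B * Real.exp (α B)) = Real.log (Real.sqrt B) := by
      rw [Real.log_mul (ne_of_gt h1) (Real.exp_ne_zero _), Real.log_exp,
        Real.log_sqrt hB.le]
      linarith
    exact Real.log_injOn_pos (mem_Ioi.mpr (by positivity)) (mem_Ioi.mpr hs) hlog
  have hmono : MonotoneOn α (Set.Ioi 0) := by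
    intro x hx y hy hxy
    have hx' : (0:ℝ) < x := hx
    have hy' : (0:ℝ) < y := hy
    by_contra h
    push_neg at h
    have hax := (hα x hx').1
    have hay := (hα y hy').1
    have hlt : α y * Real.exp (α y) < α x * Real.exp (α x) :=
      mul_lt_mul'' h (Real.exp_lt_exp.mpr h) hay.le (Real.exp_pos _).le
    rw [key x hx', key y hy'] at hlt
    have := Real.sqrt_le_sqrt hxy
    linarith
  refine ⟨?_, ?_, ?_, hmono⟩
  · intro x hx y hy hxy
    have hx' : (0:ℝ) < x := hx
    have hy' : (0:ℝ) < y := hy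
    have hax := (hα x hx').1
    have hay := (hα y hy').1
    have ex : α x / Real.sqrt x = (Real.exp (α x))⁻¹ := by
      rw [← key x hx']; field_simp
    have ey : α y / Real.sqrt y = (Real.exp (α y))⁻¹ := by
      rw [← key y hy']; field_simp
    simp only
    rw [ex, ey]
    exact inv_anti₀ (Real.exp_pos _) (Real.exp_le_exp.mpr (hmono hx hy hxy))
  · intro x hx y hy hxy
    have hx' : (0:ℝ) < x := hx
    have hy' : (0:ℝ) < y := hy
    have hax := (hα x hx').1
    have hay := (hα y hy').1
    exact mul_le_mul (hmono hx hy hxy) (Real.sqrt_le_sqrt hxy)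
      (Real.sqrt_nonneg _) hay.le
  · intro c hc αc hαc B hB
    obtain ⟨h1, h2⟩ := hαc B hB
    have hs : (0:ℝ) < Real.sqrt B := Real.sqrt_pos.mpr hB
    rw [div_le_one hs]
    by_contra h
    push_neg at h
    have hneg : Real.log (Real.sqrt B / αc B) < 0 := by
      apply Real.log_neg
      · positivity
      · rw [div_lt_one h1]; exact h
    nlinarith [div_pos (by norm_num : (0:ℝ) < 2) hc]
end

section
/- With notation as above (m̄ ∈ ℕ^N, coset representatives σ₁,…,σ_K with σ₁ = e, homomorphism ρ : S_N → S_K), the subgroup H of S_N generated by {τ σ_{ρ(τ)(1)}^{-1} : τ ∈ S_N} equals the subgroup generated by the union of the stabilizers G_{σ_j · m̄}, 1 ≤ j ≤ K. -/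
open Equiv

/-- With coset representatives `σr` of `S_N / G` (with `σr 0 = e`) and the induced
homomorphism `ρ : S_N →* S_K`, the subgroup generated by `{τ σ_{ρ(τ)(1)}⁻¹ : τ ∈ S_N}`
equals the subgroup generated by the union of the stabilizers `G_{σ_j · mbar}`. -/
theorem generated_by_coset_defects_eq (N K : ℕ) (hK : 0 < K)
    (mbar : Fin N → ℕ) (G : Subgroup (Equiv.Perm (Fin N)))
    (hG : ∀ σ : Equiv.Perm (Fin N), σ ∈ G ↔ mbar ∘ σ = mbar)
    (σr : Fin K → Equiv.Perm (Fin N)) (hσ1 : σr ⟨0, hK⟩ = 1)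
    (hrep : ∀ τ : Equiv.Perm (Fin N), ∃! j : Fin K, ∃ g ∈ G, τ = σr j * g)
    (ρ : Equiv.Perm (Fin N) →* Equiv.Perm (Fin K))
    (hρ : ∀ τ : Equiv.Perm (Fin N), ∀ i : Fin K, ∃ g ∈ G, τ * σr i = σr (ρ τ i) * g)
    (Gj : Fin K → Subgroup (Equiv.Perm (Fin N)))
    (hGj : ∀ j : Fin K, ∀ g : Equiv.Perm (Fin N),
      g ∈ Gj j ↔ (mbar ∘ σr j) ∘ g = mbar ∘ σr j) :
    Subgroup.closure {x : Equiv.Perm (Fin N) | ∃ τ, x = τ * (σr (ρ τ ⟨0, hK⟩))⁻¹}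
      = Subgroup.closure (⋃ j : Fin K, (Gj j : Set (Equiv.Perm (Fin N)))) := by
  -- `Gj j` is the conjugate `(σr j)⁻¹ G (σr j)`.
  have key : ∀ (j : Fin K) (x : Equiv.Perm (Fin N)),
      x ∈ Gj j ↔ σr j * x * (σr j)⁻¹ ∈ G := by
    intro j x
    rw [hGj, hG]
    constructor
    · intro h
      funext a
      have := congrFun h ((σr j)⁻¹ a)
      simpa [Equiv.Perm.mul_apply] using this
    · intro h
      funext a
      have := congrFun h (σr j a)
      simpa [Equiv.Perm.mul_apply] using this
  -- uniqueness: if `τ = σr j * g` with `g ∈ G` then `ρ τ 0 = j`.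
  have huniq : ∀ (τ : Equiv.Perm (Fin N)) (j : Fin K) (g : Equiv.Perm (Fin N)),
      g ∈ G → τ = σr j * g → ρ τ ⟨0, hK⟩ = j := by
    intro τ j g hg hτ
    obtain ⟨g', hg', h'⟩ := hρ τ ⟨0, hK⟩
    rw [hσ1, mul_one] at h'
    obtain ⟨j₀, _, hjuniq⟩ := hrep τ
    have h1 := hjuniq (ρ τ ⟨0, hK⟩) ⟨g', hg', h'⟩
    have h2 := hjuniq j ⟨g, hg, hτ⟩
    rw [h1, h2]
  apply le_antisymm
  · rw [Subgroup.closure_le]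
    rintro x ⟨τ, rfl⟩
    obtain ⟨g, hg, hτ⟩ := hρ τ ⟨0, hK⟩
    rw [hσ1, mul_one] at hτ
    set j := ρ τ ⟨0, hK⟩ with hj
    -- write `(σr j)⁻¹ = σr k * h` with `h ∈ G`.
    obtain ⟨k, ⟨h, hh, hk⟩, _⟩ := hrep (σr j)⁻¹
    have hσj : σr j = h⁻¹ * (σr k)⁻¹ := by
      have : (σr j)⁻¹⁻¹ = (σr k * h)⁻¹ := by rw [← hk]
      simpa [mul_inv_rev] using this
    have hx : τ * (σr j)⁻¹ = h⁻¹ * ((σr k)⁻¹ * g * σr k) * h := by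
      rw [hτ, hσj]; group
    rw [hx]
    have hy : (σr k)⁻¹ * g * σr k ∈ Gj k := by
      rw [key]
      have : σr k * ((σr k)⁻¹ * g * σr k) * (σr k)⁻¹ = g := by group
      rw [this]; exact hg
    have hhG : h ∈ Gj ⟨0, hK⟩ := by
      rw [key, hσ1]
      simpa using hh
    have memh : h ∈ Subgroup.closure (⋃ j : Fin K, (Gj j : Set (Equiv.Perm (Fin N)))) :=
      Subgroup.subset_closure (Set.mem_iUnion.2 ⟨⟨0, hK⟩, hhG⟩)
    have memy : (σr k)⁻¹ * g * σr k ∈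
        Subgroup.closure (⋃ j : Fin K, (Gj j : Set (Equiv.Perm (Fin N)))) :=
      Subgroup.subset_closure (Set.mem_iUnion.2 ⟨k, hy⟩)
    exact mul_mem (mul_mem (inv_mem memh) memy) memh
  · rw [Subgroup.closure_le]
    intro x hx
    obtain ⟨j, hxj⟩ := Set.mem_iUnion.1 hx
    have hxG : σr j * x * (σr j)⁻¹ ∈ G := (key j x).1 hxj
    obtain ⟨k, ⟨h, hh, hk⟩, _⟩ := hrep (σr j)⁻¹
    have hσj : σr j = h⁻¹ * (σr k)⁻¹ := by
      have : (σr j)⁻¹⁻¹ = (σr k * h)⁻¹ := by rw [← hk]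
      simpa [mul_inv_rev] using this
    set g := σr j * x * (σr j)⁻¹ with hg
    set g₂ := h * g * h⁻¹ with hg₂
    have hg₂G : g₂ ∈ G := mul_mem (mul_mem hh hxG) (inv_mem hh)
    set τ := σr k * g₂ with hτ
    have hρτ : ρ τ ⟨0, hK⟩ = k := huniq τ k g₂ hg₂G rfl
    have hxval : x = τ * (σr (ρ τ ⟨0, hK⟩))⁻¹ := by
      rw [hρτ, hτ, hg₂, hg, hσj]
      group
    exact Subgroup.subset_closure ⟨τ, hxval⟩
end
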